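/- For real numbers δ₁, δ₂, ω, the set 𝒢(δ₁, δ₂; ω) of (δ₁, δ₂; ω)-order growth functions is nonempty if and only if δ₂ ≥ δ₁ and ω ≥ 0. -/

import Mathlib

open MeasureTheory
open scoped BigOperators ENNReal

/-- A dyadic cube `2^{-j}([0,1)^n + k)` in `ℝⁿ`, encoded by its generation `j`
and its position `k`. -/
structure DyadicCube (n : ℕ) where
  j : ℤ
  k : Fin n → ℤ
deriving DecidableEq

namespace DyadicCube

variable {n : ℕ}

/-- The side length `ℓ(Q) = 2^{-j}`. -/
noncomputable def len (Q : DyadicCube n) : ℝ := (2 : ℝ) ^ (-Q.j)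

/-- The lower-left corner `x_Q = 2^{-j} k`. -/
noncomputable def corner (Q : DyadicCube n) (i : Fin n) : ℝ := (2 : ℝ) ^ (-Q.j) * Q.k i

/-- The volume `|Q| = 2^{-jn}`. -/
noncomputable def vol (Q : DyadicCube n) : ℝ := Q.len ^ (n : ℕ)

/-- The cube `Q` as a subset of `ℝⁿ`. -/
noncomputable def toSet (Q : DyadicCube n) : Set (Fin n → ℝ) :=
  {x | ∀ i, Q.corner i ≤ x i ∧ x i < Q.corner i + Q.len}

/-- The Euclidean distance `|x_Q - x_R|` between the corners of two dyadic cubes. -/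
noncomputable def cdist (Q R : DyadicCube n) : ℝ :=
  Real.sqrt (∑ i, (Q.corner i - R.corner i) ^ 2)

end DyadicCube

/-- `υ : 𝒟 → (0,∞)` is a `(δ₁, δ₂; ω)`-order growth function: it is positive and
`υ(Q)/υ(R) ≤ C (1 + |x_Q - x_R|/(ℓ(Q) ∨ ℓ(R)))^ω (|Q|/|R|)^{δ₁}` when `ℓ(Q) ≤ ℓ(R)`,
with exponent `δ₂` in place of `δ₁` when `ℓ(R) < ℓ(Q)`. -/
def IsGrowthFunction (n : ℕ) (δ₁ δ₂ ω : ℝ) (υ : DyadicCube n → ℝ) : Prop :=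
  (∀ Q, 0 < υ Q) ∧ ∃ C : ℝ, 0 < C ∧ ∀ Q R : DyadicCube n,
    υ Q / υ R ≤ C * (1 + Q.cdist R / max Q.len R.len) ^ ω *
      (if Q.len ≤ R.len then (Q.vol / R.vol) ^ δ₁ else (Q.vol / R.vol) ^ δ₂)

def diagCube (n : ℕ) (j : ℤ) : DyadicCube n := ⟨j, 0⟩
def shiftCube (n : ℕ) (m : ℕ) : DyadicCube n := ⟨0, fun _ => m⟩

lemma cdist_comm {n : ℕ} (Q R : DyadicCube n) : Q.cdist R = R.cdist Q := by
  unfold DyadicCube.cdist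
  congr 1
  exact Finset.sum_congr rfl fun i _ => by ring

lemma diag_len (n : ℕ) (j : ℤ) : (diagCube n j).len = (2:ℝ) ^ ((-j : ℤ) : ℝ) :=
  (Real.rpow_intCast 2 (-j)).symm

lemma diag_vol (n : ℕ) (j : ℤ) : (diagCube n j).vol = (2:ℝ) ^ ((-(j:ℝ)) * n) := by
  unfold DyadicCube.vol
  rw [diag_len, ← Real.rpow_natCast ((2:ℝ) ^ (((-j : ℤ)) : ℝ)) n, ← Real.rpow_mul (by norm_num)]
  push_cast
  ring_nf

lemma diag_cdist (n : ℕ) (j j' : ℤ) : (diagCube n j).cdist (diagCube n j') = 0 := by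
  simp [diagCube, DyadicCube.cdist, DyadicCube.corner]

lemma shift_len (n m : ℕ) : (shiftCube n m).len = 1 := by
  simp [shiftCube, DyadicCube.len]

lemma shift_vol (n m : ℕ) : (shiftCube n m).vol = 1 := by
  simp [DyadicCube.vol, shift_len]

lemma shift_cdist (n m : ℕ) : (shiftCube n m).cdist (shiftCube n 0) = Real.sqrt (n * m^2) := by
  simp [shiftCube, DyadicCube.cdist, DyadicCube.corner, Finset.sum_const, Finset.card_univ]


/-- The class `𝒢(δ₁, δ₂; ω)` of `(δ₁, δ₂; ω)`-order growth functions is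
nonempty if and only if `δ₂ ≥ δ₁` and `ω ≥ 0`. -/
theorem growth_class_nonempty_iff (n : ℕ) (hn : 0 < n) (δ₁ δ₂ ω : ℝ) :
    (∃ υ : DyadicCube n → ℝ, IsGrowthFunction n δ₁ δ₂ ω υ) ↔ (δ₁ ≤ δ₂ ∧ 0 ≤ ω) := by
  have hlp : ∀ Q : DyadicCube n, 0 < Q.len := fun Q => by
    unfold DyadicCube.len; positivity
  have hvp : ∀ Q : DyadicCube n, 0 < Q.vol := fun Q => pow_pos (hlp Q) n
  constructor
  · rintro ⟨υ, hpos, C, hC, h⟩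
    constructor
    · -- δ₁ ≤ δ₂
      by_contra hlt
      push_neg at hlt
      set t := δ₁ - δ₂ with ht
      have ht0 : 0 < t := by simp [ht]; linarith
      have hs0 : 0 < (n:ℝ) * t := by positivity
      obtain ⟨m, hm⟩ := exists_nat_gt ((C^2) ^ (((n:ℝ)*t)⁻¹))
      set M := m + 1 with hM
      have hm2 : (C^2) ^ (((n:ℝ)*t)⁻¹) < (2:ℝ) ^ M := by
        have h1 : (M:ℝ) < ((2^M : ℕ) : ℝ) := by exact_mod_cast Nat.lt_two_pow_self (n := M)
        push_cast at h1
        have h2 : (m:ℝ) < M := by exact_mod_cast Nat.lt_succ_self m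
        linarith
      have key : C^2 < (2:ℝ) ^ ((M:ℝ) * ((n:ℝ)*t)) := by
        have := Real.rpow_lt_rpow (by positivity) hm2 hs0
        rwa [← Real.rpow_mul (by positivity), inv_mul_cancel₀ hs0.ne', Real.rpow_one,
          ← Real.rpow_natCast 2 M, ← Real.rpow_mul (by norm_num)] at this
      set Qm := diagCube n (M : ℤ) with hQm
      set Q0 := diagCube n 0 with hQ0
      have hle : Qm.len ≤ Q0.len := by
        rw [hQm, hQ0, diag_len, diag_len]
        apply Real.rpow_le_rpow_of_exponent_le one_le_two
        push_cast
        have : (0:ℝ) ≤ M := by positivity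
        linarith
      have hnle : ¬ (Q0.len ≤ Qm.len) := by
        rw [hQm, hQ0, diag_len, diag_len]
        apply not_le_of_gt
        apply Real.rpow_lt_rpow_of_exponent_lt one_lt_two
        push_cast
        have : (0:ℝ) < M := by positivity
        linarith
      have A := h Qm Q0
      have B := h Q0 Qm
      rw [if_pos hle] at A
      rw [if_neg hnle] at B
      rw [hQm, hQ0, diag_cdist, diag_vol, diag_vol] at A B
      simp only [zero_div, add_zero, Real.one_rpow, mul_one, Int.cast_zero, neg_zero,
        zero_mul, Real.rpow_zero, div_one] at A B
      rw [← hQm, ← hQ0] at A B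
      rw [← Real.rpow_mul (by norm_num)] at A
      rw [one_div, ← Real.rpow_neg (by positivity), ← Real.rpow_mul (by norm_num)] at B
      have prod2 : (1:ℝ) ≤ C^2 * 2 ^ (-((M:ℝ)*((n:ℝ)*t))) := by
        calc (1:ℝ) = (υ Qm / υ Q0) * (υ Q0 / υ Qm) := by
              rw [div_mul_div_comm, mul_comm (υ Qm), div_self (mul_pos (hpos Q0) (hpos Qm)).ne']
          _ ≤ (C * 2 ^ (-(M:ℝ) * (n:ℕ) * δ₁)) * (C * 2 ^ (-(-(M:ℝ) * (n:ℕ)) * δ₂)) := by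
              apply mul_le_mul A B (le_of_lt (div_pos (hpos Q0) (hpos Qm)))
              positivity
          _ = C^2 * (2 ^ (-(M:ℝ) * (n:ℕ) * δ₁) * 2 ^ (-(-(M:ℝ) * (n:ℕ)) * δ₂)) := by ring
          _ = C^2 * 2 ^ ((-(M:ℝ) * (n:ℕ) * δ₁) + (-(-(M:ℝ) * (n:ℕ)) * δ₂)) := by
              rw [← Real.rpow_add (by norm_num)]
          _ = C^2 * 2 ^ (-((M:ℝ)*((n:ℝ)*t))) := by
              congr 1
              rw [ht]; push_cast; ring
      rw [Real.rpow_neg (by norm_num), ← div_eq_mul_inv] at prod2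
      have := (one_le_div (by positivity)).mp prod2
      linarith
    · -- 0 ≤ ω
      by_contra hw
      push_neg at hw
      set s := -(2*ω) with hs
      have hs0 : 0 < s := by simp [hs]; linarith
      obtain ⟨m, hm⟩ := exists_nat_gt ((C^2) ^ s⁻¹)
      set Rm := shiftCube n m with hRm
      set R0 := shiftCube n 0 with hR0
      set d := Rm.cdist R0 with hd
      have hdm : (m:ℝ) ≤ d := by
        rw [hd, hRm, hR0, shift_cdist]
        have h1 : ((m:ℝ))^2 ≤ (n:ℝ) * m^2 := by
          have : (1:ℝ) ≤ n := by exact_mod_cast hn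
          nlinarith [sq_nonneg ((m:ℝ))]
        calc (m:ℝ) = Real.sqrt ((m:ℝ)^2) := (Real.sqrt_sq (by positivity)).symm
          _ ≤ _ := Real.sqrt_le_sqrt h1
      have hd0 : 0 ≤ d := le_trans (by positivity) hdm
      have hlen : Rm.len = R0.len := by rw [hRm, hR0, shift_len, shift_len]
      have A := h Rm R0
      have B := h R0 Rm
      rw [if_pos (le_of_eq hlen)] at A
      rw [if_pos (le_of_eq hlen.symm)] at B
      rw [cdist_comm R0 Rm, ← hd] at B
      rw [← hd] at A
      rw [hRm, hR0] at A B
      rw [shift_len, shift_len, shift_vol, shift_vol] at A B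
      simp only [max_self, div_one, div_self (one_ne_zero), Real.one_rpow, mul_one] at A B
      rw [← hRm, ← hR0] at A B
      have key : C^2 < (1 + d) ^ s := by
        have hbase : (C^2) ^ s⁻¹ < 1 + d := by linarith
        have := Real.rpow_lt_rpow (by positivity) hbase hs0
        rwa [← Real.rpow_mul (by positivity), inv_mul_cancel₀ hs0.ne', Real.rpow_one] at this
      have prod2 : (1:ℝ) ≤ C^2 * ((1 + d) ^ s)⁻¹ := by
        calc (1:ℝ) = (υ Rm / υ R0) * (υ R0 / υ Rm) := by
              rw [div_mul_div_comm, mul_comm (υ Rm), div_self (mul_pos (hpos R0) (hpos Rm)).ne']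
          _ ≤ (C * (1 + d) ^ ω) * (C * (1 + d) ^ ω) := by
              apply mul_le_mul A B (le_of_lt (div_pos (hpos R0) (hpos Rm)))
              positivity
          _ = C^2 * ((1 + d) ^ ω * (1 + d) ^ ω) := by ring
          _ = C^2 * (1 + d) ^ (ω + ω) := by rw [← Real.rpow_add (by linarith)]
          _ = C^2 * (1 + d) ^ (-s) := by congr 1; rw [hs]; ring
          _ = C^2 * ((1 + d) ^ s)⁻¹ := by rw [Real.rpow_neg (by linarith)]
      rw [← div_eq_mul_inv] at prod2
      have := (one_le_div (by positivity)).mp prod2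
      linarith
  · rintro ⟨h12, hw⟩
    refine ⟨fun Q => Q.vol ^ δ₁, fun Q => Real.rpow_pos_of_pos (hvp Q) δ₁, 1, one_pos, ?_⟩
    intro Q R
    have hfac : 1 ≤ (1 + Q.cdist R / max Q.len R.len) ^ ω := by
      apply Real.one_le_rpow _ hw
      have h1 : 0 ≤ Q.cdist R := Real.sqrt_nonneg _
      have h2 : 0 < max Q.len R.len := lt_max_of_lt_left (hlp Q)
      have := div_nonneg h1 h2.le
      linarith
    have hratio : Q.vol ^ δ₁ / R.vol ^ δ₁ = (Q.vol / R.vol) ^ δ₁ :=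
      (Real.div_rpow (hvp Q).le (hvp R).le δ₁).symm
    rw [one_mul, hratio]
    split_ifs with hl
    · exact le_mul_of_one_le_left (Real.rpow_nonneg (div_pos (hvp Q) (hvp R)).le δ₁) hfac
    · push_neg at hl
      have hr1 : 1 ≤ Q.vol / R.vol := by
        rw [one_le_div (hvp R)]
        exact pow_le_pow_left₀ (hlp R).le hl.le n
      calc (Q.vol / R.vol) ^ δ₁ ≤ (Q.vol / R.vol) ^ δ₂ :=
            Real.rpow_le_rpow_of_exponent_le hr1 h12
        _ ≤ _ := le_mul_of_one_le_left (Real.rpow_nonneg (div_pos (hvp Q) (hvp R)).le δ₂) hfac
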